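/- In the single-subsystem case with α ∈ (0,1): suppose each g_j is Lipschitz continuous on ℝⁿ and there is a constant L_f ≥ 0 with ‖f(x,d) − f(y,d)‖ ≤ L_f · ‖x − y‖ for all x, y ∈ ℝⁿ and d ∈ D. Then the value function V is a continuous bounded solution of the Bellman equation V(x) = max( α · sup_{d ∈ D} V(f(x,d)), max_{1 ≤ j ≤ n₀} g_j(x) ), and any bounded function satisfying this equation at every x ∈ ℝⁿ coincides with V. -/
import Mathlib


/-- Trajectory of the discrete-time system `f` from initial state `x`
under input policy `π` : `φ_x^π(0) = x`, `φ_x^π(l+1) = f(φ_x^π(l), π(l))`. -/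
noncomputable def traj {n m : ℕ} (f : (Fin n → ℝ) → (Fin m → ℝ) → (Fin n → ℝ))
    (x : Fin n → ℝ) (π : ℕ → Fin m → ℝ) : ℕ → Fin n → ℝ
  | 0 => x
  | l + 1 => f (traj f x π l) (π l)

/-- Value function `V(x) = sup_{π, l, j} α^l · g_j(φ_x^π(l))`, where the
supremum ranges over input policies `π` (sequences taking values in `D`),
times `l ∈ ℕ` and indices `j ∈ {1,…,n₀}`. -/
noncomputable def valueFun {n m n₀ : ℕ} (f : (Fin n → ℝ) → (Fin m → ℝ) → (Fin n → ℝ))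
    (D : Set (Fin m → ℝ)) (g : Fin n₀ → (Fin n → ℝ) → ℝ) (α : ℝ)
    (x : Fin n → ℝ) : ℝ :=
  sSup {v : ℝ | ∃ π : ℕ → Fin m → ℝ, (∀ i, π i ∈ D) ∧
    ∃ l : ℕ, ∃ j : Fin n₀, v = α ^ l * g j (traj f x π l)}

lemma traj_shift {n m : ℕ} (f : (Fin n → ℝ) → (Fin m → ℝ) → (Fin n → ℝ))
    (x : Fin n → ℝ) (π : ℕ → Fin m → ℝ) (l : ℕ) :
    traj f x π (l + 1) = traj f (f x (π 0)) (fun i => π (i + 1)) l := by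
  induction l with
  | zero => rfl
  | succ l ih =>
    show f (traj f x π (l + 1)) (π (l + 1)) = _
    rw [ih]; rfl

lemma traj_lip {n m : ℕ} {f : (Fin n → ℝ) → (Fin m → ℝ) → (Fin n → ℝ)}
    {D : Set (Fin m → ℝ)} {Lf : ℝ} (hLf : 0 ≤ Lf)
    (hflip : ∀ (x y : Fin n → ℝ), ∀ d ∈ D, ‖f x d - f y d‖ ≤ Lf * ‖x - y‖)
    (x y : Fin n → ℝ) (π : ℕ → Fin m → ℝ) (hπ : ∀ i, π i ∈ D) (l : ℕ) :
    ‖traj f x π l - traj f y π l‖ ≤ Lf ^ l * ‖x - y‖ := by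
  induction l with
  | zero => simp [traj]
  | succ l ih =>
    calc ‖traj f x π (l + 1) - traj f y π (l + 1)‖
        ≤ Lf * ‖traj f x π l - traj f y π l‖ := hflip _ _ _ (hπ l)
      _ ≤ Lf * (Lf ^ l * ‖x - y‖) := mul_le_mul_of_nonneg_left ih hLf
      _ = Lf ^ (l + 1) * ‖x - y‖ := by ring

/-- in the single-subsystem case with `α ∈ (0,1)`, Lipschitz
`g_j`'s and dynamics `f(·,d)` that is `L_f`-Lipschitz uniformly in `d ∈ D`,
the value function `V` is a continuous bounded solution of the Bellman
equation `V(x) = max( α · sup_{d ∈ D} V(f(x,d)), max_{1 ≤ j ≤ n₀} g_j(x) )`,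
and any bounded function satisfying this equation coincides with `V`. -/
theorem valueFun_unique_continuous_bellman_solution {n m n₀ : ℕ} (hn₀ : 1 ≤ n₀)
    (f : (Fin n → ℝ) → (Fin m → ℝ) → (Fin n → ℝ))
    (D : Set (Fin m → ℝ)) (hD : D.Nonempty)
    (g : Fin n₀ → (Fin n → ℝ) → ℝ)
    (hg : ∀ (j : Fin n₀) (x : Fin n → ℝ), -1 < g j x ∧ g j x < 1)
    (hglip : ∀ j : Fin n₀, ∃ L : NNReal, LipschitzWith L (g j))
    (Lf : ℝ) (hLf : 0 ≤ Lf)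
    (hflip : ∀ (x y : Fin n → ℝ), ∀ d ∈ D, ‖f x d - f y d‖ ≤ Lf * ‖x - y‖)
    (α : ℝ) (hα : α ∈ Set.Ioo (0 : ℝ) 1) :
    Continuous (valueFun f D g α) ∧
    (∃ C : ℝ, ∀ x : Fin n → ℝ, |valueFun f D g α x| ≤ C) ∧
    (∀ x : Fin n → ℝ,
      valueFun f D g α x =
        max (α * sSup {v : ℝ | ∃ d ∈ D, v = valueFun f D g α (f x d)})
          (⨆ j : Fin n₀, g j x)) ∧
    (∀ U : (Fin n → ℝ) → ℝ, (∃ C : ℝ, ∀ x, |U x| ≤ C) →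
      (∀ x : Fin n → ℝ,
        U x = max (α * sSup {v : ℝ | ∃ d ∈ D, v = U (f x d)})
          (⨆ j : Fin n₀, g j x)) →
      ∀ x : Fin n → ℝ, U x = valueFun f D g α x) := by
  obtain ⟨hα0, hα1⟩ := hα
  obtain ⟨d₀, hd₀⟩ := hD
  haveI : Nonempty (Fin n₀) := ⟨⟨0, hn₀⟩⟩
  set V := valueFun f D g α with hV
  set S : (Fin n → ℝ) → Set ℝ := fun x => {v : ℝ | ∃ π : ℕ → Fin m → ℝ,
    (∀ i, π i ∈ D) ∧ ∃ l : ℕ, ∃ j : Fin n₀, v = α ^ l * g j (traj f x π l)} with hS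
  have hVS : ∀ x, V x = sSup (S x) := fun x => rfl
  -- basic bounds on elements of S x
  have hgabs : ∀ (j : Fin n₀) (y : Fin n → ℝ), |g j y| ≤ 1 := fun j y =>
    abs_le.mpr ⟨(hg j y).1.le, (hg j y).2.le⟩
  have hSb : ∀ x, ∀ v ∈ S x, |v| ≤ 1 := by
    rintro x v ⟨π, hπ, l, j, rfl⟩
    rw [abs_mul, abs_pow, abs_of_pos hα0]
    calc α ^ l * |g j (traj f x π l)| ≤ α ^ l * 1 :=
          mul_le_mul_of_nonneg_left (hgabs _ _) (pow_nonneg hα0.le l)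
      _ ≤ 1 := by rw [mul_one]; exact pow_le_one₀ hα0.le hα1.le
  have hSne : ∀ x, (S x).Nonempty := fun x =>
    ⟨α ^ 0 * g ⟨0, hn₀⟩ (traj f x (fun _ => d₀) 0),
      ⟨fun _ => d₀, fun _ => hd₀, 0, ⟨0, hn₀⟩, rfl⟩⟩
  have hSbdd : ∀ x, BddAbove (S x) := fun x =>
    ⟨1, fun v hv => (abs_le.mp (hSb x v hv)).2⟩
  have hVle : ∀ x, |V x| ≤ 1 := by
    intro x
    rw [abs_le]
    constructor
    · obtain ⟨v, hv⟩ := hSne x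
      exact le_trans (abs_le.mp (hSb x v hv)).1 (le_csSup (hSbdd x) hv)
    · exact csSup_le (hSne x) fun v hv => (abs_le.mp (hSb x v hv)).2
  have hmemV : ∀ x, ∀ v ∈ S x, v ≤ V x := fun x v hv => le_csSup (hSbdd x) hv
  -- the shifted-policy membership: α * (element of S (f x d)) ∈ S x for d ∈ D
  have hshift : ∀ (x : Fin n → ℝ) (d : Fin m → ℝ), d ∈ D → ∀ w ∈ S (f x d),
      α * w ∈ S x := by
    rintro x d hd w ⟨π, hπ, l, j, rfl⟩
    refine ⟨fun i => Nat.casesOn i d (fun k => π k), fun i => ?_, l + 1, j, ?_⟩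
    · cases i with
      | zero => exact hd
      | succ k => exact hπ k
    · rw [traj_shift]
      show α * (α ^ l * g j (traj f (f x d) π l)) =
        α ^ (l + 1) * g j (traj f (f x d) (fun i => π i) l)
      ring_nf
  -- bounds on the Bellman sup set, for any function bounded by C
  have hTne : ∀ (U : (Fin n → ℝ) → ℝ) (x : Fin n → ℝ),
      {v : ℝ | ∃ d ∈ D, v = U (f x d)}.Nonempty :=
    fun U x => ⟨U (f x d₀), d₀, hd₀, rfl⟩
  have hTbdd : ∀ (U : (Fin n → ℝ) → ℝ), (∀ x, |U x| ≤ 1) → ∀ (x : Fin n → ℝ),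
      BddAbove {v : ℝ | ∃ d ∈ D, v = U (f x d)} := by
    rintro U hU x
    exact ⟨1, by rintro v ⟨d, hd, rfl⟩; exact (abs_le.mp (hU _)).2⟩
  have hGbdd : ∀ x : Fin n → ℝ, BddAbove (Set.range fun j => g j x) :=
    fun x => (Set.finite_range _).bddAbove
  -- Bellman equation for V
  have hbell : ∀ x : Fin n → ℝ,
      V x = max (α * sSup {v : ℝ | ∃ d ∈ D, v = V (f x d)}) (⨆ j : Fin n₀, g j x) := by
    intro x
    apply le_antisymm
    · rw [hVS]
      apply csSup_le (hSne x)
      rintro v ⟨π, hπ, l, j, rfl⟩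
      cases l with
      | zero =>
        apply le_max_of_le_right
        simpa [traj] using le_ciSup (hGbdd x) j
      | succ l =>
        apply le_max_of_le_left
        have h1 : α ^ l * g j (traj f (f x (π 0)) (fun i => π (i + 1)) l)
            ∈ S (f x (π 0)) := ⟨fun i => π (i + 1), fun i => hπ (i + 1), l, j, rfl⟩
        have h2 : α ^ l * g j (traj f (f x (π 0)) (fun i => π (i + 1)) l)
            ≤ V (f x (π 0)) := hmemV _ _ h1
        have h3 : V (f x (π 0)) ≤ sSup {v : ℝ | ∃ d ∈ D, v = V (f x d)} :=
          le_csSup (hTbdd V hVle x) ⟨π 0, hπ 0, rfl⟩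
        calc α ^ (l + 1) * g j (traj f x π (l + 1))
            = α * (α ^ l * g j (traj f (f x (π 0)) (fun i => π (i + 1)) l)) := by
              rw [traj_shift]; ring
          _ ≤ α * sSup {v : ℝ | ∃ d ∈ D, v = V (f x d)} :=
              mul_le_mul_of_nonneg_left (h2.trans h3) hα0.le
    · apply max_le
      · rw [mul_comm, ← le_div_iff₀ hα0]
        apply csSup_le (hTne V x)
        rintro v ⟨d, hd, rfl⟩
        rw [le_div_iff₀ hα0, mul_comm]
        have : α * V (f x d) ≤ V x := by
          rw [hVS (f x d), hVS x]
          rw [mul_comm, ← le_div_iff₀ hα0]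
          apply csSup_le (hSne _)
          intro w hw
          rw [le_div_iff₀ hα0, mul_comm]
          exact hmemV x _ (hshift x d hd w hw)
        exact this
      · apply ciSup_le
        intro j
        apply hmemV
        exact ⟨fun _ => d₀, fun _ => hd₀, 0, j, by simp [traj]⟩
  -- Uniqueness
  have huniq : ∀ U : (Fin n → ℝ) → ℝ, (∃ C : ℝ, ∀ x, |U x| ≤ C) →
      (∀ x : Fin n → ℝ,
        U x = max (α * sSup {v : ℝ | ∃ d ∈ D, v = U (f x d)})
          (⨆ j : Fin n₀, g j x)) →
      ∀ x : Fin n → ℝ, U x = V x := by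
    rintro U ⟨C, hC⟩ hUbell
    set M : ℝ := sSup (Set.range fun x => |U x - V x|) with hM
    have hMbdd : BddAbove (Set.range fun x => |U x - V x|) := by
      refine ⟨C + 1, ?_⟩
      rintro v ⟨x, rfl⟩
      calc |U x - V x| ≤ |U x| + |V x| := abs_sub _ _
        _ ≤ C + 1 := add_le_add (hC x) (hVle x)
    have hMne : (Set.range fun x => |U x - V x|).Nonempty := ⟨_, 0, rfl⟩
    have hMmem : ∀ x, |U x - V x| ≤ M := fun x => le_csSup hMbdd ⟨x, rfl⟩
    have hM0 : 0 ≤ M := le_trans (abs_nonneg _) (hMmem 0)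
    have hUbdd : ∀ x, BddAbove {v : ℝ | ∃ d ∈ D, v = U (f x d)} := by
      intro x
      exact ⟨C, by rintro v ⟨d, hd, rfl⟩; exact (abs_le.mp (hC _)).2⟩
    have key : ∀ x, |U x - V x| ≤ α * M := by
      intro x
      rw [hUbell x, hbell x]
      have h := abs_max_sub_max_le_max
        (α * sSup {v : ℝ | ∃ d ∈ D, v = U (f x d)}) (⨆ j : Fin n₀, g j x)
        (α * sSup {v : ℝ | ∃ d ∈ D, v = V (f x d)}) (⨆ j : Fin n₀, g j x)
      simp only [sub_self, abs_zero] at h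
      refine h.trans (max_le ?_ (by positivity))
      rw [← mul_sub, abs_mul, abs_of_pos hα0]
      apply mul_le_mul_of_nonneg_left _ hα0.le
      rw [abs_sub_le_iff]
      constructor
      · rw [sub_le_iff_le_add]
        apply csSup_le (hTne U x)
        rintro v ⟨d, hd, rfl⟩
        have h1 := hMmem (f x d)
        rw [abs_le] at h1
        have h2 : V (f x d) ≤ sSup {v : ℝ | ∃ d ∈ D, v = V (f x d)} :=
          le_csSup (hTbdd V hVle x) ⟨d, hd, rfl⟩
        linarith [h1.2]
      · rw [sub_le_iff_le_add]
        apply csSup_le (hTne V x)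
        rintro v ⟨d, hd, rfl⟩
        have h1 := hMmem (f x d)
        rw [abs_le] at h1
        have h2 : U (f x d) ≤ sSup {v : ℝ | ∃ d ∈ D, v = U (f x d)} :=
          le_csSup (hUbdd x) ⟨d, hd, rfl⟩
        linarith [h1.1]
    have hMα : M ≤ α * M := by
      apply csSup_le hMne
      rintro v ⟨x, rfl⟩
      exact key x
    have hMzero : M = 0 := by nlinarith
    intro x
    have := hMmem x
    rw [hMzero] at this
    have := abs_nonneg (U x - V x)
    have h0 : |U x - V x| = 0 := le_antisymm (hMmem x |>.trans_eq hMzero) (abs_nonneg _)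
    rw [abs_eq_zero, sub_eq_zero] at h0
    exact h0
  -- Continuity
  -- uniform Lipschitz constant for the g j
  obtain ⟨Lg, hLg⟩ : ∃ Lg : NNReal, ∀ j : Fin n₀, ∀ a b : Fin n → ℝ,
      |g j a - g j b| ≤ (Lg : ℝ) * ‖a - b‖ := by
    choose L hL using hglip
    refine ⟨Finset.univ.sup L, fun j a b => ?_⟩
    have h1 := (hL j).dist_le_mul a b
    rw [Real.dist_eq, dist_eq_norm] at h1
    refine h1.trans (mul_le_mul_of_nonneg_right ?_ (norm_nonneg _))
    exact_mod_cast NNReal.coe_le_coe.mpr (Finset.le_sup (Finset.mem_univ j))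
  have hcontkey : ∀ ε > (0 : ℝ), ∃ K : ℝ, 0 ≤ K ∧ ∀ x y : Fin n → ℝ,
      V x ≤ V y + (ε + K * ‖x - y‖) := by
    intro ε hε
    obtain ⟨N, hN⟩ := exists_pow_lt_of_lt_one (half_pos hε) hα1
    refine ⟨(Lg : ℝ) * (1 + α * Lf) ^ N, by positivity, fun x y => ?_⟩
    rw [hVS x]
    apply csSup_le (hSne x)
    rintro v ⟨π, hπ, l, j, rfl⟩
    have hw : α ^ l * g j (traj f y π l) ≤ V y :=
      hmemV y _ ⟨π, hπ, l, j, rfl⟩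
    have hdiff : |α ^ l * g j (traj f x π l) - α ^ l * g j (traj f y π l)|
        ≤ ε + (Lg : ℝ) * (1 + α * Lf) ^ N * ‖x - y‖ := by
      rcases Nat.lt_or_ge l N with hl | hl
      · -- small l: Lipschitz bound
        have h1 : |α ^ l * g j (traj f x π l) - α ^ l * g j (traj f y π l)|
            = α ^ l * |g j (traj f x π l) - g j (traj f y π l)| := by
          rw [← mul_sub, abs_mul, abs_pow, abs_of_pos hα0]
        rw [h1]
        have h2 := hLg j (traj f x π l) (traj f y π l)
        have h3 := traj_lip hLf hflip x y π hπ l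
        have h4 : α ^ l * |g j (traj f x π l) - g j (traj f y π l)|
            ≤ α ^ l * ((Lg : ℝ) * (Lf ^ l * ‖x - y‖)) := by
          apply mul_le_mul_of_nonneg_left _ (pow_nonneg hα0.le l)
          exact h2.trans (mul_le_mul_of_nonneg_left h3 Lg.coe_nonneg)
        refine h4.trans ?_
        have h5 : α ^ l * ((Lg : ℝ) * (Lf ^ l * ‖x - y‖))
            = (Lg : ℝ) * (α * Lf) ^ l * ‖x - y‖ := by rw [mul_pow]; ring
        rw [h5]
        have h6 : (α * Lf) ^ l ≤ (1 + α * Lf) ^ N := by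
          calc (α * Lf) ^ l ≤ (1 + α * Lf) ^ l :=
                pow_le_pow_left₀ (by positivity) (by linarith) l
            _ ≤ (1 + α * Lf) ^ N :=
                pow_le_pow_right₀ (le_add_of_nonneg_right (by positivity)) hl.le
        have : (Lg : ℝ) * (α * Lf) ^ l * ‖x - y‖
            ≤ (Lg : ℝ) * (1 + α * Lf) ^ N * ‖x - y‖ := by
          apply mul_le_mul_of_nonneg_right _ (norm_nonneg _)
          exact mul_le_mul_of_nonneg_left h6 Lg.coe_nonneg
        linarith
      · -- large l: tail bound
        have hb : ∀ z : Fin n → ℝ, |α ^ l * g j (traj f z π l)| ≤ α ^ N := by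
          intro z
          rw [abs_mul, abs_pow, abs_of_pos hα0]
          calc α ^ l * |g j (traj f z π l)| ≤ α ^ l * 1 :=
                mul_le_mul_of_nonneg_left (hgabs _ _) (pow_nonneg hα0.le l)
            _ = α ^ l := mul_one _
            _ ≤ α ^ N := pow_le_pow_of_le_one hα0.le hα1.le hl
        have h1 := hb x
        have h2 := hb y
        have h3 : |α ^ l * g j (traj f x π l) - α ^ l * g j (traj f y π l)|
            ≤ 2 * α ^ N := by
          calc |α ^ l * g j (traj f x π l) - α ^ l * g j (traj f y π l)|
              ≤ |α ^ l * g j (traj f x π l)| + |α ^ l * g j (traj f y π l)| :=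
                abs_sub _ _
            _ ≤ 2 * α ^ N := by linarith
        have h4 : (0:ℝ) ≤ (Lg : ℝ) * (1 + α * Lf) ^ N * ‖x - y‖ := by positivity
        linarith
    have := (abs_le.mp hdiff).2
    linarith
  have hcont : Continuous V := by
    rw [Metric.continuous_iff]
    intro x ε hε
    obtain ⟨K, hK0, hK⟩ := hcontkey (ε / 2) (half_pos hε)
    refine ⟨(ε / 2) / (K + 1), by positivity, fun y hy => ?_⟩
    rw [Real.dist_eq]
    have h1 := hK y x
    have h2 := hK x y
    have hxy : ‖y - x‖ < (ε / 2) / (K + 1) := by rwa [dist_eq_norm] at hy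
    have hyx : ‖x - y‖ < (ε / 2) / (K + 1) := by rwa [norm_sub_rev]
    have hK1 : K * ((ε / 2) / (K + 1)) < ε / 2 := by
      rw [mul_div_assoc'] at *
      rw [div_lt_iff₀ (by positivity)]
      nlinarith
    have hb1 : K * ‖y - x‖ ≤ K * ((ε / 2) / (K + 1)) :=
      mul_le_mul_of_nonneg_left hxy.le hK0
    have hb2 : K * ‖x - y‖ ≤ K * ((ε / 2) / (K + 1)) :=
      mul_le_mul_of_nonneg_left hyx.le hK0
    rw [abs_lt]
    constructor <;> nlinarith
  refine ⟨hcont, ⟨1, hVle⟩, hbell, huniq⟩
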